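/- arXiv:1905.12354 — 5 statements merged into one kernel-verified Lean document; each statement's English description precedes it below -/
import Mathlib

section
/- Let V, R > 0 and β₀, β₁, β₂ ∈ ℝ with β₂ > 0. Define h(P) = β₂P² + β₁P + β₀, ψ(y) = (V²/(2R))·(1 − √(1 − (4R/V²)·y)), g = ψ ∘ h, and g⁻¹(x) = −β₁/(2β₂) + √(−R·x²/(β₂V²) + (x − β₀)/β₂ + β₁²/(4β₂²)). Then for every P with P ≥ −β₁/(2β₂) and h(P) ≤ V²/(4R), the radicand −R·g(P)²/(β₂V²) + (g(P) − β₀)/β₂ + β₁²/(4β₂²) is nonnegative and g⁻¹(g(P)) = P. -/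
/-!
`ψ(y)` is a root of the battery power balance `x - R x² / V² = y`, so `g(P) - R g(P)² / V² = h(P)`.
Substituting this into the radicand of `g⁻¹` at `g(P)` leaves `(h(P) - β₀) / β₂ + β₁² / (4 β₂²)`,
which is `(P + β₁ / (2 β₂))²` by completing the square; on the branch `P ≥ -β₁ / (2 β₂)` its
square root is `P + β₁ / (2 β₂)`.
-/

open Real

noncomputable def batteryPower (V R y : ℝ) : ℝ :=
  V ^ 2 / (2 * R) * (1 - √(1 - 4 * R / V ^ 2 * y))

lemma one_sub_mul_nonneg_of_le_div {V R y : ℝ} (hV : V ≠ 0) (hR : 0 < R)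
    (hy : y ≤ V ^ 2 / (4 * R)) : 0 ≤ 1 - 4 * R / V ^ 2 * y := by
  have hle : 4 * R / V ^ 2 * y ≤ 4 * R / V ^ 2 * (V ^ 2 / (4 * R)) := by gcongr
  have hone : 4 * R / V ^ 2 * (V ^ 2 / (4 * R)) = 1 := by field_simp
  linarith

lemma batteryPower_sub_sq {V R y : ℝ} (hV : V ≠ 0) (hR : R ≠ 0)
    (hy : 0 ≤ 1 - 4 * R / V ^ 2 * y) :
    batteryPower V R y - R * batteryPower V R y ^ 2 / V ^ 2 = y := by
  unfold batteryPower
  have hs := sq_sqrt hy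
  -- keeps `field_simp` from rewriting under the square root
  set s := √(1 - 4 * R / V ^ 2 * y)
  field_simp at hs ⊢
  linear_combination -hs

lemma radicand_eq_sq_of_sub_sq {V R β₀ β₁ β₂ x P : ℝ} (hβ₂ : β₂ ≠ 0)
    (hx : x - R * x ^ 2 / V ^ 2 = β₂ * P ^ 2 + β₁ * P + β₀) :
    -(R * x ^ 2) / (β₂ * V ^ 2) + (x - β₀) / β₂ + β₁ ^ 2 / (4 * β₂ ^ 2)
      = (P + β₁ / (2 * β₂)) ^ 2 := by
  have hsplit : -(R * x ^ 2) / (β₂ * V ^ 2) + (x - β₀) / β₂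
      = (x - R * x ^ 2 / V ^ 2 - β₀) / β₂ := by ring
  rw [hsplit, hx]
  field_simp
  ring

/-- `g⁻¹` is a left inverse of the battery power function `g = ψ ∘ h` on the
domain where `g` is real-valued and nondecreasing, and the radicand appearing
in `g⁻¹(g(P))` is nonnegative there. -/
theorem stmt_4 (V R β₀ β₁ β₂ : ℝ) (hV : 0 < V) (hR : 0 < R) (hβ₂ : 0 < β₂)
    (h : ℝ → ℝ) (ψ : ℝ → ℝ) (g : ℝ → ℝ) (ginv : ℝ → ℝ)
    (hh : ∀ P, h P = β₂ * P ^ 2 + β₁ * P + β₀)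
    (hψ : ∀ y, ψ y = V ^ 2 / (2 * R) * (1 - Real.sqrt (1 - 4 * R / V ^ 2 * y)))
    (hg : ∀ P, g P = ψ (h P))
    (hginv : ∀ x, ginv x = -β₁ / (2 * β₂) +
      Real.sqrt (-(R * x ^ 2) / (β₂ * V ^ 2) + (x - β₀) / β₂ + β₁ ^ 2 / (4 * β₂ ^ 2))) :
    ∀ P : ℝ, -β₁ / (2 * β₂) ≤ P → h P ≤ V ^ 2 / (4 * R) →
      0 ≤ -(R * (g P) ^ 2) / (β₂ * V ^ 2) + (g P - β₀) / β₂ + β₁ ^ 2 / (4 * β₂ ^ 2) ∧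
        ginv (g P) = P := by
  intro P hP hhP
  have hgP : g P = batteryPower V R (h P) := by rw [hg, hψ, batteryPower]
  have hbalance : g P - R * g P ^ 2 / V ^ 2 = β₂ * P ^ 2 + β₁ * P + β₀ := by
    rw [hgP, ← hh]
    exact batteryPower_sub_sq hV.ne' hR.ne' (one_sub_mul_nonneg_of_le_div hV.ne' hR hhP)
  have hrad := radicand_eq_sq_of_sub_sq hβ₂.ne' hbalance
  have hbranch : 0 ≤ P + β₁ / (2 * β₂) := by linarith [neg_div (2 * β₂) β₁]
  refine ⟨hrad ▸ sq_nonneg _, ?_⟩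
  rw [hginv, hrad, sqrt_sq hbranch]
  ring
end

section
/- Let V, R > 0 and β₀, β₁, β₂ ∈ ℝ with β₂ > 0. Define h(P) = β₂P² + β₁P + β₀, ψ(y) = (V²/(2R))·(1 − √(1 − (4R/V²)·y)), g = ψ ∘ h, and g⁻¹(x) = −β₁/(2β₂) + √(−R·x²/(β₂V²) + (x − β₀)/β₂ + β₁²/(4β₂²)). Then for every x ≤ V²/(2R) such that the radicand −R·x²/(β₂V²) + (x − β₀)/β₂ + β₁²/(4β₂²) is nonnegative, one has h(g⁻¹(x)) = x − R·x²/V² ≤ V²/(4R) and g(g⁻¹(x)) = x. -/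
/-- `g⁻¹` is a right inverse of the battery power function `g = ψ ∘ h` on the
set where `x ≤ V²/(2R)` and the radicand of `g⁻¹` is nonnegative; moreover
`h(g⁻¹(x)) = x − Rx²/V² ≤ V²/(4R)`. -/
theorem stmt_5 (V R β₀ β₁ β₂ : ℝ) (hV : 0 < V) (hR : 0 < R) (hβ₂ : 0 < β₂)
    (h : ℝ → ℝ) (ψ : ℝ → ℝ) (g : ℝ → ℝ) (ginv : ℝ → ℝ)
    (hh : ∀ P, h P = β₂ * P ^ 2 + β₁ * P + β₀)
    (hψ : ∀ y, ψ y = V ^ 2 / (2 * R) * (1 - Real.sqrt (1 - 4 * R / V ^ 2 * y)))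
    (hg : ∀ P, g P = ψ (h P))
    (hginv : ∀ x, ginv x = -β₁ / (2 * β₂) +
      Real.sqrt (-(R * x ^ 2) / (β₂ * V ^ 2) + (x - β₀) / β₂ + β₁ ^ 2 / (4 * β₂ ^ 2))) :
    ∀ x : ℝ, x ≤ V ^ 2 / (2 * R) →
      0 ≤ -(R * x ^ 2) / (β₂ * V ^ 2) + (x - β₀) / β₂ + β₁ ^ 2 / (4 * β₂ ^ 2) →
      h (ginv x) = x - R * x ^ 2 / V ^ 2 ∧
        x - R * x ^ 2 / V ^ 2 ≤ V ^ 2 / (4 * R) ∧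
        g (ginv x) = x := by
  intro x hx hD
  have hV2 : (0:ℝ) < V ^ 2 := by positivity
  set D := -(R * x ^ 2) / (β₂ * V ^ 2) + (x - β₀) / β₂ + β₁ ^ 2 / (4 * β₂ ^ 2) with hDdef
  have hs : Real.sqrt D ^ 2 = D := Real.sq_sqrt hD
  have h1 : h (ginv x) = x - R * x ^ 2 / V ^ 2 := by
    rw [hh, hginv, ← hDdef]
    set s := Real.sqrt D with hsdef
    rw [hDdef] at hs
    field_simp at hs ⊢
    nlinarith [hs, sq_nonneg s, hβ₂.ne', hV2.ne']
  refine ⟨h1, ?_, ?_⟩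
  · have key : x - R * x ^ 2 / V ^ 2 = V ^ 2 / (4 * R) - R / V ^ 2 * (x - V ^ 2 / (2 * R)) ^ 2 := by
      field_simp; ring
    have hnn : 0 ≤ R / V ^ 2 * (x - V ^ 2 / (2 * R)) ^ 2 := by positivity
    linarith
  · rw [hg, h1, hψ]
    have e2 : 1 - 4 * R / V ^ 2 * (x - R * x ^ 2 / V ^ 2) = (1 - 2 * R * x / V ^ 2) ^ 2 := by
      field_simp; ring
    have hpos : 0 ≤ 1 - 2 * R * x / V ^ 2 := by
      rw [sub_nonneg, div_le_one hV2]
      calc 2 * R * x ≤ 2 * R * (V ^ 2 / (2 * R)) := by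
            exact mul_le_mul_of_nonneg_left hx (by positivity)
        _ = V ^ 2 := by field_simp
    rw [e2, Real.sqrt_sq hpos]
    field_simp
    ring
end

section
/- Let V, R > 0 and β₀, β₁, β₂ ∈ ℝ with β₂ > 0. The function g⁻¹(x) = −β₁/(2β₂) + √(−R·x²/(β₂V²) + (x − β₀)/β₂ + β₁²/(4β₂²)) is concave on the set {x ∈ ℝ : −R·x²/(β₂V²) + (x − β₀)/β₂ + β₁²/(4β₂²) ≥ 0}, which is an interval. -/
private lemma aux_concave (c d e : ℝ) (hc : 0 ≤ c) :
    ConcaveOn ℝ Set.univ (fun x : ℝ => -(c * x ^ 2) + d * x + e) := by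
  refine ⟨convex_univ, fun x _ y _ a b ha hb hab => ?_⟩
  have hb' : b = 1 - a := by linarith
  subst hb'
  simp only [smul_eq_mul]
  nlinarith [mul_nonneg (mul_nonneg hc ha) (mul_nonneg hb (sq_nonneg (x - y)))]

/-- The closed-form inverse battery power function
`g⁻¹(x) = −β₁/(2β₂) + √(−Rx²/(β₂V²) + (x − β₀)/β₂ + β₁²/(4β₂²))`
is concave on the set where its radicand is nonnegative, which is an interval
(i.e. a convex subset of `ℝ`). -/
theorem stmt_6 (V R β₀ β₁ β₂ : ℝ) (hV : 0 < V) (hR : 0 < R) (hβ₂ : 0 < β₂) :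
    Convex ℝ {x : ℝ |
        0 ≤ -(R * x ^ 2) / (β₂ * V ^ 2) + (x - β₀) / β₂ + β₁ ^ 2 / (4 * β₂ ^ 2)} ∧
      ConcaveOn ℝ {x : ℝ |
          0 ≤ -(R * x ^ 2) / (β₂ * V ^ 2) + (x - β₀) / β₂ + β₁ ^ 2 / (4 * β₂ ^ 2)}
        (fun x : ℝ => -β₁ / (2 * β₂) +
          Real.sqrt (-(R * x ^ 2) / (β₂ * V ^ 2) + (x - β₀) / β₂ + β₁ ^ 2 / (4 * β₂ ^ 2))) := by
  have hden : (0:ℝ) < β₂ * V ^ 2 := by positivity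
  -- the radicand is concave on univ
  have hqconc : ConcaveOn ℝ Set.univ
      (fun x : ℝ => -(R * x ^ 2) / (β₂ * V ^ 2) + (x - β₀) / β₂ + β₁ ^ 2 / (4 * β₂ ^ 2)) := by
    have h := aux_concave (R / (β₂ * V ^ 2)) (1 / β₂)
      (-β₀ / β₂ + β₁ ^ 2 / (4 * β₂ ^ 2)) (by positivity)
    convert h using 2 with x
    field_simp
    ring
  have hSconv : Convex ℝ {x : ℝ |
      0 ≤ -(R * x ^ 2) / (β₂ * V ^ 2) + (x - β₀) / β₂ + β₁ ^ 2 / (4 * β₂ ^ 2)} := by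
    have := hqconc.convex_ge 0
    simpa using this
  refine ⟨hSconv, ?_⟩
  have hsqrt : ConcaveOn ℝ {x : ℝ |
      0 ≤ -(R * x ^ 2) / (β₂ * V ^ 2) + (x - β₀) / β₂ + β₁ ^ 2 / (4 * β₂ ^ 2)}
      (fun x : ℝ => Real.sqrt
        (-(R * x ^ 2) / (β₂ * V ^ 2) + (x - β₀) / β₂ + β₁ ^ 2 / (4 * β₂ ^ 2))) := by
    refine ⟨hSconv, fun x hx y hy a b ha hb hab => ?_⟩
    have hx' : (0:ℝ) ≤ -(R * x ^ 2) / (β₂ * V ^ 2) + (x - β₀) / β₂ + β₁ ^ 2 / (4 * β₂ ^ 2) := hx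
    have hy' : (0:ℝ) ≤ -(R * y ^ 2) / (β₂ * V ^ 2) + (y - β₀) / β₂ + β₁ ^ 2 / (4 * β₂ ^ 2) := hy
    have h1 := Real.strictConcaveOn_sqrt.concaveOn.2 hx' hy' ha hb hab
    have h2 := hqconc.2 (Set.mem_univ x) (Set.mem_univ y) ha hb hab
    exact h1.trans (Real.sqrt_le_sqrt h2)
  exact (concaveOn_const (-β₁ / (2 * β₂)) hSconv).add hsqrt
end

section
/- Let a, γ, δ, c, w, u ∈ ℝ with γ ≤ δ, and let ρ₃, ρ₄ > 0. Define q(η, σ) = c·σ + (ρ₃/2)·(w − η)² + (ρ₄/2)·(u − σ)² and the nonconvex feasible set F = {(a, 0)} ∪ ([a + γ, a + δ] × {1}) ⊆ ℝ². Then the minimum of q over F is attained, and min_{(η,σ)∈F} q(η, σ) = min( q(a, 0), q(min(a + δ, max(a + γ, w)), 1) ); in particular a minimizer is either (a, 0) or (clamp(w, a+γ, a+δ), 1). -/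
lemma clamp_sq_le (lo hi w η : ℝ) (h : lo ≤ hi) (h1 : lo ≤ η) (h2 : η ≤ hi) :
    (w - min hi (max lo w)) ^ 2 ≤ (w - η) ^ 2 := by
  rcases le_total w lo with hw | hw
  · rw [max_eq_left hw, min_eq_right h]
    nlinarith
  · rcases le_total w hi with hw2 | hw2
    · rw [max_eq_right hw, min_eq_right hw2]
      simpa using sq_nonneg (w - η)
    · rw [max_eq_right hw, min_eq_left hw2]
      nlinarith

/-- The combined `(η_k, σ_k)`-update of the ADMM algorithm in the nonconvex
phase `𝒮 = {0,1}`: the minimum of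
`q(η, σ) = cσ + (ρ₃/2)(w − η)² + (ρ₄/2)(u − σ)²` over the nonconvex feasible
set `F = {(a, 0)} ∪ ([a+γ, a+δ] × {1})` is attained and equals
`min(q(a, 0), q(clamp(w, a+γ, a+δ), 1))`; in particular a minimizer is either
`(a, 0)` or `(clamp(w, a+γ, a+δ), 1)`. -/
theorem stmt_12 (a γ δ c w u ρ₃ ρ₄ : ℝ) (hγδ : γ ≤ δ)
    (hρ₃ : 0 < ρ₃) (hρ₄ : 0 < ρ₄) :
    IsLeast
      ((fun x : ℝ × ℝ => c * x.2 + ρ₃ / 2 * (w - x.1) ^ 2 + ρ₄ / 2 * (u - x.2) ^ 2) ''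
        ({(a, 0)} ∪ Set.Icc (a + γ) (a + δ) ×ˢ {(1 : ℝ)}))
      (min (c * 0 + ρ₃ / 2 * (w - a) ^ 2 + ρ₄ / 2 * (u - 0) ^ 2)
        (c * 1 + ρ₃ / 2 * (w - min (a + δ) (max (a + γ) w)) ^ 2 + ρ₄ / 2 * (u - 1) ^ 2)) ∧
    ∃ x ∈ ({((a : ℝ), (0 : ℝ))} ∪ Set.Icc (a + γ) (a + δ) ×ˢ {(1 : ℝ)} : Set (ℝ × ℝ)),
      (x = (a, 0) ∨ x = (min (a + δ) (max (a + γ) w), 1)) ∧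
      ∀ y ∈ ({((a : ℝ), (0 : ℝ))} ∪ Set.Icc (a + γ) (a + δ) ×ˢ {(1 : ℝ)} : Set (ℝ × ℝ)),
        c * x.2 + ρ₃ / 2 * (w - x.1) ^ 2 + ρ₄ / 2 * (u - x.2) ^ 2
          ≤ c * y.2 + ρ₃ / 2 * (w - y.1) ^ 2 + ρ₄ / 2 * (u - y.2) ^ 2 := by
  set m := min (a + δ) (max (a + γ) w) with hm
  have hlohi : a + γ ≤ a + δ := by linarith
  have hm1 : a + γ ≤ m := le_min hlohi (le_max_left _ _)
  have hm2 : m ≤ a + δ := min_le_left _ _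
  have hmmem : (m, (1:ℝ)) ∈ ({((a : ℝ), (0 : ℝ))} ∪
      Set.Icc (a + γ) (a + δ) ×ˢ {(1 : ℝ)} : Set (ℝ × ℝ)) := by
    right; exact ⟨⟨hm1, hm2⟩, rfl⟩
  have hamem : ((a:ℝ), (0:ℝ)) ∈ ({((a : ℝ), (0 : ℝ))} ∪
      Set.Icc (a + γ) (a + δ) ×ˢ {(1 : ℝ)} : Set (ℝ × ℝ)) := Or.inl rfl
  set A := c * (0:ℝ) + ρ₃ / 2 * (w - a) ^ 2 + ρ₄ / 2 * (u - (0:ℝ)) ^ 2 with hA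
  set B := c * (1:ℝ) + ρ₃ / 2 * (w - m) ^ 2 + ρ₄ / 2 * (u - (1:ℝ)) ^ 2 with hB
  have key : ∀ y ∈ ({((a : ℝ), (0 : ℝ))} ∪ Set.Icc (a + γ) (a + δ) ×ˢ {(1 : ℝ)} : Set (ℝ × ℝ)),
      min A B ≤ c * y.2 + ρ₃ / 2 * (w - y.1) ^ 2 + ρ₄ / 2 * (u - y.2) ^ 2 := by
    rintro y (hy | ⟨hy1, hy2⟩)
    · rw [Set.mem_singleton_iff] at hy
      subst hy
      exact min_le_left _ _
    · have hsq : (w - m) ^ 2 ≤ (w - y.1) ^ 2 :=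
        clamp_sq_le _ _ _ _ hlohi hy1.1 hy1.2
      simp only [Set.mem_singleton_iff] at hy2
      calc min A B ≤ B := min_le_right _ _
        _ ≤ c * y.2 + ρ₃ / 2 * (w - y.1) ^ 2 + ρ₄ / 2 * (u - y.2) ^ 2 := by
            rw [hB, hy2]; nlinarith
  constructor
  · constructor
    · rcases le_total A B with h | h
      · rw [min_eq_left h]
        exact ⟨(a, 0), hamem, rfl⟩
      · rw [min_eq_right h]
        exact ⟨(m, 1), hmmem, rfl⟩
    · rintro v ⟨y, hy, rfl⟩
      exact key y hy
  · rcases le_total A B with h | h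
    · refine ⟨(a, 0), hamem, Or.inl rfl, fun y hy => ?_⟩
      have := key y hy
      rw [min_eq_left h] at this
      exact this
    · refine ⟨(m, 1), hmmem, Or.inr rfl, fun y hy => ?_⟩
      have := key y hy
      rw [min_eq_right h] at this
      exact this
end

section
/- Let N : ℕ and let Ψ be the N×N real lower-triangular matrix with Ψ_{ij} = 1 for j ≤ i and Ψ_{ij} = 0 otherwise. Let 𝒫 and ℬ be disjoint subsets of {0,…,N−1}, and for each k ∈ 𝒫 ∪ ℬ let c_k ≥ 0; for each k let a_k ∈ ℝ and γ_k ≤ 0 ≤ δ_k; for each k ∈ 𝒫 let φ_k : ℝ → ℝ satisfy φ_k(a_k) = c_k and φ_k(p) ≥ c_k for all p ∈ [a_k + γ_k, a_k + δ_k]; and let k_d ≥ 0. Define J(P_b, σ) = Σ_{k∈𝒫} [φ_k(P_{b,k}) + (σ_k − 1)c_k] + Σ_{k∈ℬ} σ_k c_k + (k_d/2)·‖Ψ⁻¹σ‖². Then for every (P_b, σ) ∈ ℝ^N × ℝ^N with 0 ≤ σ_k ≤ 1 and a_k + σ_k γ_k ≤ P_{b,k} ≤ a_k + σ_k δ_k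 for all k, one has J(P_b, σ) ≥ 0; moreover J(a, 0) = 0, where a = (a_0,…,a_{N−1}). Hence (P_b, σ) = (a, 0) is optimal among all feasible points containing it (all-electric operation is optimal whenever it is feasible). -/
open Matrix

/-- The `N×N` lower-triangular matrix of ones. -/
def psiMat (N : ℕ) : Matrix (Fin N) (Fin N) ℝ := fun i j => if j ≤ i then 1 else 0

/-- All-electric operation is optimal whenever it is feasible: under the
stated assumptions the objective `J` of the energy management problem is
nonnegative on the feasible set and vanishes at `(P_b, σ) = (a, 0)`. -/
theorem stmt_15 (N : ℕ) (P B : Finset (Fin N)) (hdisj : Disjoint P B)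
    (c : Fin N → ℝ) (hc : ∀ k ∈ P ∪ B, 0 ≤ c k)
    (a γ δ : Fin N → ℝ) (hγ : ∀ k, γ k ≤ 0) (hδ : ∀ k, 0 ≤ δ k)
    (φ : Fin N → ℝ → ℝ)
    (hφa : ∀ k ∈ P, φ k (a k) = c k)
    (hφ : ∀ k ∈ P, ∀ p ∈ Set.Icc (a k + γ k) (a k + δ k), c k ≤ φ k p)
    (kd : ℝ) (hkd : 0 ≤ kd) :
    (∀ Pb σ : Fin N → ℝ,
      (∀ k, 0 ≤ σ k ∧ σ k ≤ 1 ∧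
        a k + σ k * γ k ≤ Pb k ∧ Pb k ≤ a k + σ k * δ k) →
      0 ≤ (∑ k ∈ P, (φ k (Pb k) + (σ k - 1) * c k)) + (∑ k ∈ B, σ k * c k)
            + kd / 2 * (((psiMat N)⁻¹ *ᵥ σ) ⬝ᵥ ((psiMat N)⁻¹ *ᵥ σ))) ∧
    (∑ k ∈ P, (φ k (a k) + ((0 : Fin N → ℝ) k - 1) * c k))
        + (∑ k ∈ B, (0 : Fin N → ℝ) k * c k)
        + kd / 2 * (((psiMat N)⁻¹ *ᵥ (0 : Fin N → ℝ)) ⬝ᵥ ((psiMat N)⁻¹ *ᵥ (0 : Fin N → ℝ)))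
      = 0 := by
  constructor
  · intro Pb σ hfeas
    have h1 : 0 ≤ ∑ k ∈ P, (φ k (Pb k) + (σ k - 1) * c k) := by
      apply Finset.sum_nonneg
      intro k hk
      obtain ⟨hσ0, hσ1, hlo, hhi⟩ := hfeas k
      have hck : 0 ≤ c k := hc k (Finset.mem_union_left _ hk)
      have hmem : Pb k ∈ Set.Icc (a k + γ k) (a k + δ k) := by
        constructor
        · have : γ k ≤ σ k * γ k := by nlinarith [hγ k]
          linarith
        · have : σ k * δ k ≤ δ k := by nlinarith [hδ k]
          linarith
      have := hφ k hk (Pb k) hmem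
      nlinarith
    have h2 : 0 ≤ ∑ k ∈ B, σ k * c k := by
      apply Finset.sum_nonneg
      intro k hk
      exact mul_nonneg (hfeas k).1 (hc k (Finset.mem_union_right _ hk))
    have h3 : 0 ≤ ((psiMat N)⁻¹ *ᵥ σ) ⬝ᵥ ((psiMat N)⁻¹ *ᵥ σ) := by
      apply Finset.sum_nonneg
      intro i _
      exact mul_self_nonneg _
    positivity
  · have : ∀ k ∈ P, φ k (a k) + ((0 : Fin N → ℝ) k - 1) * c k = 0 := by
      intro k hk
      simp [hφa k hk]
    rw [Finset.sum_congr rfl this]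
    simp [Matrix.mulVec_zero]
end
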